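/- Let n ≥ 1, let Σ be an n×n real symmetric positive definite matrix, let κ ∈ ℝⁿ and τ² > 0, and suppose s² := τ² − κᵀ Σ⁻¹ κ > 0. Let a ≥ 1 be a natural number, φ ∈ ℝ, and set w := a · Θ(φ)(1 − Θ(φ)) where Θ(t) = (1 + e^{−t})^{−1}. Define the (n+1)×(n+1) block matrix Σ₊ = [[Σ, κ], [κᵀ, τ² + 1/w]] and the vector u = (κ, τ²) ∈ ℝ^{n+1} (the concatenation of κ with the scalar τ²). Then Σ₊ is invertible and the look-ahead predictive variance satisfies τ² − uᵀ Σ₊⁻¹ u = (1/s² + w)⁻¹. -/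
import Mathlib


open Matrix

/-- The logistic (inverse canonical Bernoulli link) function `Θ(t) = (1 + e^{-t})⁻¹`. -/
noncomputable def logistic (t : ℝ) : ℝ := (1 + Real.exp (-t))⁻¹

lemma logistic_pos (t : ℝ) : 0 < logistic t := by
  unfold logistic
  positivity

lemma logistic_lt_one (t : ℝ) : logistic t < 1 := by
  unfold logistic
  have h := Real.exp_pos (-t)
  rw [inv_lt_one_iff₀]
  right
  linarith

/-- Theorem 1 of the paper: the look-ahead predictive variance of a
binomial Gaussian process under the Laplace approximation.  With
`Σ₊ = [[Σ, κ], [κᵀ, τ² + 1/w]]`, `u = (κ, τ²)` and `w = a Θ(φ)(1 − Θ(φ))`,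
the matrix `Σ₊` is invertible and `τ² − uᵀ Σ₊⁻¹ u = (1/s² + w)⁻¹`, where
`s² = τ² − κᵀ Σ⁻¹ κ`. -/
theorem lookahead_predictive_variance
    (n : ℕ) (hn : 1 ≤ n) (S : Matrix (Fin n) (Fin n) ℝ) (hS : S.PosDef)
    (κ : Fin n → ℝ) (τsq : ℝ) (hτ : 0 < τsq)
    (hs : 0 < τsq - κ ⬝ᵥ (S⁻¹ *ᵥ κ))
    (a : ℕ) (ha : 1 ≤ a) (φ : ℝ)
    (w : ℝ) (hw : w = (a : ℝ) * logistic φ * (1 - logistic φ))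
    (Splus : Matrix (Fin n ⊕ Unit) (Fin n ⊕ Unit) ℝ)
    (hSplus : Splus = Matrix.fromBlocks S
      (Matrix.of fun i (_ : Unit) => κ i)
      (Matrix.of fun (_ : Unit) j => κ j)
      (Matrix.of fun (_ : Unit) (_ : Unit) => τsq + 1 / w))
    (u : Fin n ⊕ Unit → ℝ) (hu : u = Sum.elim κ (fun _ => τsq)) :
    IsUnit Splus.det ∧
    τsq - u ⬝ᵥ (Splus⁻¹ *ᵥ u) = ((τsq - κ ⬝ᵥ (S⁻¹ *ᵥ κ))⁻¹ + w)⁻¹ := by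
  have hdet : IsUnit S.det := isUnit_iff_ne_zero.2 (ne_of_gt hS.det_pos)
  haveI : Invertible S := S.invertibleOfIsUnitDet hdet
  have hwpos : 0 < w := by
    rw [hw]
    have h1 := logistic_pos φ
    have h2 := logistic_lt_one φ
    have h3 : (0:ℝ) < a := by exact_mod_cast Nat.lt_of_lt_of_le Nat.zero_lt_one ha
    have : 0 < 1 - logistic φ := by linarith
    positivity
  set q : ℝ := κ ⬝ᵥ (S⁻¹ *ᵥ κ) with hqdef
  have hspos : 0 < τsq - q := hs
  have hdpos : 0 < (τsq - q) + 1 / w := by positivity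
  have hschur : (Matrix.of (fun (_ : Unit) (_ : Unit) => τsq + 1 / w) -
      (Matrix.of fun (_ : Unit) j => κ j) * S⁻¹ *
      (Matrix.of fun i (_ : Unit) => κ i) : Matrix Unit Unit ℝ) default default
      = (τsq - q) + 1 / w := by
    simp only [Matrix.sub_apply, Matrix.of_apply, Matrix.mul_apply, hqdef, dotProduct,
      Matrix.mulVec, dotProduct, Finset.sum_mul, Finset.mul_sum]
    rw [Finset.sum_comm]
    have hsum : ∑ y : Fin n, ∑ x : Fin n, κ y * S⁻¹ y x * κ x
        = ∑ x : Fin n, ∑ i : Fin n, κ x * (S⁻¹ x i * κ i) :=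
      Finset.sum_congr rfl fun j _ => Finset.sum_congr rfl fun k _ => by ring
    rw [hsum]
    ring
  have hdetP : Splus.det = S.det * ((τsq - q) + 1 / w) := by
    rw [hSplus, Matrix.det_fromBlocks₁₁, Matrix.invOf_eq_nonsing_inv]
    congr 1
    rw [Matrix.det_unique, hschur]
  have hPdet : IsUnit Splus.det := by
    rw [hdetP]
    exact hdet.mul (isUnit_iff_ne_zero.2 (ne_of_gt hdpos))
  refine ⟨hPdet, ?_⟩
  have hwne : w ≠ 0 := ne_of_gt hwpos
  have hsne : τsq - q ≠ 0 := ne_of_gt hspos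
  have hdne : (τsq - q) + 1 / w ≠ 0 := ne_of_gt hdpos
  set x2 : ℝ := (τsq - q) / ((τsq - q) + 1 / w) with hx2
  set x1 : Fin n → ℝ := (1 - x2) • (S⁻¹ *ᵥ κ) with hx1
  have hSinv : S *ᵥ (S⁻¹ *ᵥ κ) = κ := by
    rw [Matrix.mulVec_mulVec, Matrix.mul_nonsing_inv _ hdet, Matrix.one_mulVec]
  have hx : Splus *ᵥ (Sum.elim x1 fun _ => x2) = u := by
    rw [hSplus, hu]
    funext i
    rw [Matrix.fromBlocks_mulVec]
    have hcl : (Sum.elim x1 (fun _ : Unit => x2)) ∘ Sum.inl = x1 := rfl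
    have hcr : (Sum.elim x1 (fun _ : Unit => x2)) ∘ Sum.inr = fun _ => x2 := rfl
    rw [hcl, hcr]
    cases i with
    | inl i =>
      simp only [Sum.elim_inl, Pi.add_apply]
      have hA : S *ᵥ x1 = (1 - x2) • κ := by rw [hx1, Matrix.mulVec_smul, hSinv]
      rw [hA]
      have hB : ((Matrix.of fun i (_ : Unit) => κ i) *ᵥ fun _ => x2) i = κ i * x2 := by
        simp [Matrix.mulVec, dotProduct]
      rw [hB]
      simp only [Pi.smul_apply, smul_eq_mul]
      ring
    | inr _ =>
      simp only [Sum.elim_inr, Pi.add_apply]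
      have hC : ((Matrix.of fun (_ : Unit) j => κ j) *ᵥ x1) () = (1 - x2) * q := by
        show κ ⬝ᵥ x1 = (1 - x2) * q
        rw [hx1, dotProduct_smul, smul_eq_mul, hqdef]
      have hD : ((Matrix.of fun (_ : Unit) (_ : Unit) => τsq + 1 / w) *ᵥ fun _ => x2) ()
          = (τsq + 1 / w) * x2 := by
        simp [Matrix.mulVec, dotProduct]
      rw [hC, hD, hx2]
      field_simp
      ring
  have hinv : Splus⁻¹ *ᵥ u = Sum.elim x1 fun _ => x2 := by
    rw [← hx, Matrix.mulVec_mulVec, Matrix.nonsing_inv_mul _ hPdet, Matrix.one_mulVec]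
  rw [hinv, hu]
  have hdot : Sum.elim κ (fun _ : Unit => τsq) ⬝ᵥ Sum.elim x1 (fun _ => x2)
      = κ ⬝ᵥ x1 + τsq * x2 := by
    simp [dotProduct, Fintype.sum_sum_type]
  rw [hdot, hx1, dotProduct_smul, smul_eq_mul, ← hqdef, hx2]
  have hne2 : (τsq - q)⁻¹ + w ≠ 0 := by positivity
  field_simp
  ring
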